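/- Let (K, T, w, A) be a WSC satisfying the exactly-two condition. Then the abelianization Ab(π₁(K, w, A)) is isomorphic to the direct sum, over the edges ab of K, of the groups: ℤ/w(ab) if ab lies in A; ℤ/w(ab) if ab does not lie in A but ab is an edge of some 2-simplex in T; and ℤ if ab does not lie in A and ab is not an edge of any 2-simplex in T. -/

import Mathlib

open scoped Classical

variable {V : Type*}

/-- Generators of the weighted fundamental group: edges `ab` of `K` with `a < b`. -/
def WGen [LinearOrder V] (K : SimpleGraph V) : Type _ :=
  {p : V × V // p.1 < p.2 ∧ K.Adj p.1 p.2}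

/-- The relators of the weighted fundamental group: (1) `g_{ab}^{w(ab)}` for edges of the
spanning tree `A`; (2) `g_{ab}^{w(ab)} · (g_{av}^{w(av)} · g_{vb}^{w(vb)})⁻¹` for 2-simplices
`{a, v, b} ∈ T` with `a < v < b`. -/
def WRelators [LinearOrder V] (K : SimpleGraph V) (T : Set (Finset V))
    (w : Sym2 V → ℤ) (A : SimpleGraph V) : Set (FreeGroup (WGen K)) :=
  {r | ∃ e : WGen K, A.Adj e.1.1 e.1.2 ∧ r = FreeGroup.of e ^ w s(e.1.1, e.1.2)} ∪
  {r | ∃ (a v b : V) (hav : a < v) (hvb : v < b)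
       (h1 : K.Adj a v) (h2 : K.Adj v b) (h3 : K.Adj a b),
       ({a, v, b} : Finset V) ∈ T ∧
       r = FreeGroup.of (⟨(a, b), hav.trans hvb, h3⟩ : WGen K) ^ w s(a, b) *
         (FreeGroup.of (⟨(a, v), hav, h1⟩ : WGen K) ^ w s(a, v) *
          FreeGroup.of (⟨(v, b), hvb, h2⟩ : WGen K) ^ w s(v, b))⁻¹}

/-- The weighted fundamental group `π₁(K, w, A)` of the WSC `(K, T, w, A)`,
as a presented group. -/
def wpi1 [LinearOrder V] (K : SimpleGraph V) (T : Set (Finset V))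
    (w : Sym2 V → ℤ) (A : SimpleGraph V) : Type _ :=
  PresentedGroup (WRelators K T w A)

noncomputable instance [LinearOrder V] (K : SimpleGraph V) (T : Set (Finset V))
    (w : Sym2 V → ℤ) (A : SimpleGraph V) : Group (wpi1 K T w A) := by
  unfold wpi1; infer_instance

/-- `(K, T, w, A)` is a weighted simplicial complex: `K` is a connected simple graph,
`T` is a set of 2-simplices (unordered triples of distinct pairwise adjacent vertices),
and `A` is a spanning tree of `K`. -/
structure IsWSC (K : SimpleGraph V) (T : Set (Finset V))
    (w : Sym2 V → ℤ) (A : SimpleGraph V) : Prop where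
  conn : K.Connected
  tri : ∀ t ∈ T, ∃ a v b : V, a ≠ v ∧ v ≠ b ∧ a ≠ b ∧ t = {a, v, b} ∧
        K.Adj a v ∧ K.Adj v b ∧ K.Adj a b
  tree : A.IsTree
  le : A ≤ K

/-- Exactly two of the three edges of every 2-simplex of `T` lie in the tree `A`. -/
def ExactlyTwo [LinearOrder V] (T : Set (Finset V)) (A : SimpleGraph V) : Prop :=
  ∀ a v b : V, a < v → v < b → ({a, v, b} : Finset V) ∈ T →
    ((if A.Adj a b then 1 else 0) + (if A.Adj a v then 1 else 0) +
      (if A.Adj v b then 1 else 0) : ℕ) = 2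

open scoped DirectSum

/-- The modulus of the cyclic factor associated to an edge of `K`:
`|w(ab)|` if `ab` lies in `A` or is an edge of some 2-simplex in `T`,
and `0` otherwise (recall `ZMod 0 = ℤ`, so `ℤ/0 ≅ ℤ`). -/
noncomputable def facMod [LinearOrder V] (K : SimpleGraph V) (T : Set (Finset V))
    (w : Sym2 V → ℤ) (A : SimpleGraph V) (e : WGen K) : ℕ :=
  if A.Adj e.1.1 e.1.2 then (w s(e.1.1, e.1.2)).natAbs
  else if ∃ t ∈ T, e.1.1 ∈ t ∧ e.1.2 ∈ t then (w s(e.1.1, e.1.2)).natAbs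
  else 0

section Aux
variable [LinearOrder V] {K : SimpleGraph V} {T : Set (Finset V)} {w : Sym2 V → ℤ}
  {A : SimpleGraph V}
lemma wrel_one {r : FreeGroup (WGen K)} (hr : r ∈ WRelators K T w A) :
    PresentedGroup.mk (WRelators K T w A) r = 1 :=
  (QuotientGroup.eq_one_iff r).mpr (Subgroup.subset_normalClosure hr)
lemma tree_rel (e : WGen K) (hA : A.Adj e.1.1 e.1.2) :
    (PresentedGroup.of e : PresentedGroup (WRelators K T w A)) ^ w s(e.1.1, e.1.2) = 1 := by
  have h := wrel_one (T := T) (w := w) (Or.inl ⟨e, hA, rfl⟩)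
  rwa [map_zpow] at h
lemma tri_rel {a v b : V} (hav : a < v) (hvb : v < b) (h1 : K.Adj a v) (h2 : K.Adj v b)
    (h3 : K.Adj a b) (ht : ({a, v, b} : Finset V) ∈ T) :
    (PresentedGroup.of (α := WGen K) ⟨(a, b), hav.trans hvb, h3⟩ :
        PresentedGroup (WRelators K T w A)) ^ w s(a, b) =
      (PresentedGroup.of (α := WGen K) ⟨(a, v), hav, h1⟩ : PresentedGroup (WRelators K T w A)) ^ w s(a, v) *
        PresentedGroup.of (α := WGen K) ⟨(v, b), hvb, h2⟩ ^ w s(v, b) := by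
  have h : PresentedGroup.mk (WRelators K T w A)
      (FreeGroup.of (α := WGen K) ⟨(a, b), hav.trans hvb, h3⟩ ^ w s(a, b) *
        (FreeGroup.of (α := WGen K) ⟨(a, v), hav, h1⟩ ^ w s(a, v) *
          FreeGroup.of (α := WGen K) ⟨(v, b), hvb, h2⟩ ^ w s(v, b))⁻¹) = 1 := wrel_one (w := w) (A := A) (Or.inr ⟨a, v, b, hav, hvb, h1, h2, h3, ht, rfl⟩)
  rw [map_mul, map_inv, map_mul, map_zpow, map_zpow, map_zpow, mul_inv_eq_one] at h
  exact h
lemma sort3 {a v b : V} (h1 : a ≠ v) (h2 : v ≠ b) (h3 : a ≠ b)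
    (ka : K.Adj a v) (kb : K.Adj v b) (kc : K.Adj a b) :
    ∃ x y z : V, x < y ∧ y < z ∧ ({x, y, z} : Finset V) = {a, v, b} ∧
      K.Adj x y ∧ K.Adj y z ∧ K.Adj x z := by
  rcases h1.lt_or_gt with hav | hva
  · rcases h2.lt_or_gt with hvb | hbv
    · exact ⟨a, v, b, hav, hvb, rfl, ka, kb, kc⟩
    · rcases h3.lt_or_gt with hab | hba
      · exact ⟨a, b, v, hab, hbv, by ext p; simp; tauto, kc, kb.symm, ka⟩
      · exact ⟨b, a, v, hba, hav, by ext p; simp; tauto, kc.symm, ka, kb.symm⟩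
  · rcases h3.lt_or_gt with hab | hba
    · exact ⟨v, a, b, hva, hab, by ext p; simp; tauto, ka.symm, kc, kb⟩
    · rcases h2.lt_or_gt with hvb | hbv
      · exact ⟨v, b, a, hvb, hba, by ext p; simp; tauto, kb, kc.symm, ka.symm⟩
      · exact ⟨b, v, a, hbv, hva, by ext p; simp; tauto, kb.symm, ka.symm, kc.symm⟩
lemma pair_cases {x y z p q : V} (hxy : x < y) (hyz : y < z)
    (hp : p = x ∨ p = y ∨ p = z) (hq : q = x ∨ q = y ∨ q = z) (hpq : p < q) :
    (p = x ∧ q = y) ∨ (p = x ∧ q = z) ∨ (p = y ∧ q = z) := by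
  rcases hp with rfl | rfl | rfl <;> rcases hq with rfl | rfl | rfl <;>
    first
      | exact absurd hpq (lt_irrefl _)
      | exact absurd hpq (asymm hxy)
      | exact absurd hpq (asymm hyz)
      | exact absurd hpq (asymm (hxy.trans hyz))
      | tauto

lemma pow_w_eq_one (hwsc : IsWSC K T w A) (h2 : ExactlyTwo T A) (e : WGen K)
    (he : A.Adj e.1.1 e.1.2 ∨ ∃ t ∈ T, e.1.1 ∈ t ∧ e.1.2 ∈ t) :
    (PresentedGroup.of e : PresentedGroup (WRelators K T w A)) ^ w s(e.1.1, e.1.2) = 1 := by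
  by_cases hA : A.Adj e.1.1 e.1.2
  · exact tree_rel e hA
  obtain ⟨t, htt, h1t, h2t⟩ := he.resolve_left hA
  obtain ⟨a, v, b, d1, d2, d3, teq, k1, k2, k3⟩ := hwsc.tri t htt
  obtain ⟨x, y, z, hxy, hyz, hset, kxy, kyz, kxz⟩ := sort3 d1 d2 d3 k1 k2 k3
  have htT : ({x, y, z} : Finset V) ∈ T := by
    have ht2 : t = ({x, y, z} : Finset V) := by rw [teq, hset]; ext p; simp
    rwa [ht2] at htt
  rw [teq] at h1t h2t
  simp only [Finset.mem_insert, Finset.mem_singleton] at h1t h2t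
  have hmem : ∀ p : V, (p = a ∨ p = v ∨ p = b) → (p = x ∨ p = y ∨ p = z) := by
    intro p hp
    have hp2 : p ∈ ({x, y, z} : Finset V) := by
      rw [hset]; simp only [Finset.mem_insert, Finset.mem_singleton]; tauto
    simpa using hp2
  have count := h2 x y z hxy hyz htT
  have tr := tri_rel (w := w) (A := A) hxy hyz kxy kyz kxz htT
  obtain ⟨he1, he2⟩ | ⟨he1, he2⟩ | ⟨he1, he2⟩ :=
    pair_cases hxy hyz (hmem _ h1t) (hmem _ h2t) e.2.1
  · -- e = (x, y)
    have hee : e = ⟨(x, y), hxy, kxy⟩ := Subtype.ext (Prod.ext he1 he2)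
    rw [he1, he2] at hA
    simp only [if_neg hA] at count
    split_ifs at count with c1 c2
    · have t1 := tree_rel (T := T) (w := w) (⟨(x, z), hxy.trans hyz, kxz⟩ : WGen K) c1
      have t2 := tree_rel (T := T) (w := w) (⟨(y, z), hyz, kyz⟩ : WGen K) c2
      rw [t1, t2, mul_one] at tr
      rw [hee]
      exact tr.symm
    all_goals omega
  · -- e = (x, z)
    have hee : e = ⟨(x, z), hxy.trans hyz, kxz⟩ := Subtype.ext (Prod.ext he1 he2)
    rw [he1, he2] at hA
    simp only [if_neg hA] at count
    split_ifs at count with c1 c2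
    · have t1 := tree_rel (T := T) (w := w) (⟨(x, y), hxy, kxy⟩ : WGen K) c1
      have t2 := tree_rel (T := T) (w := w) (⟨(y, z), hyz, kyz⟩ : WGen K) c2
      rw [t1, t2, mul_one] at tr
      rw [hee]
      exact tr
    all_goals omega
  · -- e = (y, z)
    have hee : e = ⟨(y, z), hyz, kyz⟩ := Subtype.ext (Prod.ext he1 he2)
    rw [he1, he2] at hA
    simp only [if_neg hA] at count
    split_ifs at count with c1 c2
    · have t1 := tree_rel (T := T) (w := w) (⟨(x, z), hxy.trans hyz, kxz⟩ : WGen K) c1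
      have t2 := tree_rel (T := T) (w := w) (⟨(x, y), hxy, kxy⟩ : WGen K) c2
      rw [t1, t2, one_mul] at tr
      rw [hee]
      exact tr.symm
    all_goals omega

lemma pow_natAbs {G : Type*} [Group G] {g : G} {m : ℤ} (h : g ^ m = 1) :
    g ^ (m.natAbs : ℤ) = 1 := by
  rcases Int.natAbs_eq m with h' | h'
  · rw [← h']; exact h
  · rw [show ((m.natAbs : ℤ)) = -m by omega, zpow_neg, h, inv_one]

lemma pow_fac (hwsc : IsWSC K T w A) (h2 : ExactlyTwo T A) (e : WGen K) :
    (PresentedGroup.of e : PresentedGroup (WRelators K T w A)) ^ (facMod K T w A e : ℤ) = 1 := by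
  unfold facMod
  split_ifs with hA hT
  · exact pow_natAbs (pow_w_eq_one hwsc h2 e (Or.inl hA))
  · exact pow_natAbs (pow_w_eq_one hwsc h2 e (Or.inr hT))
  · simp

lemma facMod_eq_natAbs (e : WGen K)
    (he : A.Adj e.1.1 e.1.2 ∨ ∃ t ∈ T, e.1.1 ∈ t ∧ e.1.2 ∈ t) :
    facMod K T w A e = (w s(e.1.1, e.1.2)).natAbs := by
  unfold facMod
  split_ifs with hA hT
  · rfl
  · rfl
  · rcases he with h | h
    · exact absurd h hA
    · exact absurd h hT
end Aux

open scoped DirectSum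

section Main

variable [LinearOrder V] {K : SimpleGraph V} {T : Set (Finset V)} {w : Sym2 V → ℤ}
  {A : SimpleGraph V}

variable (K T w A) in
/-- The basis element of the direct sum associated to an edge. -/
noncomputable def genD (e : WGen K) : ⨁ e : WGen K, ZMod (facMod K T w A e) :=
  DirectSum.of (fun e => ZMod (facMod K T w A e)) e 1

lemma ofAdd_genD_pow (e : WGen K)
    (he : A.Adj e.1.1 e.1.2 ∨ ∃ t ∈ T, e.1.1 ∈ t ∧ e.1.2 ∈ t) :
    Multiplicative.ofAdd (genD K T w A e) ^ w s(e.1.1, e.1.2) = 1 := by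
  rw [← ofAdd_zsmul]
  have h0 : ((w s(e.1.1, e.1.2) : ℤ) : ZMod (facMod K T w A e)) = 0 := by
    rw [facMod_eq_natAbs e he, ZMod.intCast_zmod_eq_zero_iff_dvd]
    exact Int.natAbs_dvd.mpr dvd_rfl
  have h1 : w s(e.1.1, e.1.2) • genD K T w A e = 0 := by
    unfold genD
    rw [← map_zsmul, zsmul_one, h0, map_zero]
  rw [h1]
  rfl

lemma lift_rels : ∀ r ∈ WRelators K T w A,
    FreeGroup.lift (fun e => Multiplicative.ofAdd (genD K T w A e)) r = 1 := by
  rintro r (⟨e, hA, rfl⟩ | ⟨a, v, b, hav, hvb, k1, k2, k3, ht, rfl⟩)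
  · rw [map_zpow, FreeGroup.lift_apply_of]
    exact ofAdd_genD_pow e (Or.inl hA)
  · show FreeGroup.lift (fun e => Multiplicative.ofAdd (genD K T w A e))
      (FreeGroup.of (α := WGen K) ⟨(a, b), hav.trans hvb, k3⟩ ^ w s(a, b) *
        (FreeGroup.of (α := WGen K) ⟨(a, v), hav, k1⟩ ^ w s(a, v) *
          FreeGroup.of (α := WGen K) ⟨(v, b), hvb, k2⟩ ^ w s(v, b))⁻¹) = 1
    rw [map_mul, map_inv, map_mul, map_zpow, map_zpow, map_zpow]
    have key : ∀ e : WGen K, (A.Adj e.1.1 e.1.2 ∨ ∃ t ∈ T, e.1.1 ∈ t ∧ e.1.2 ∈ t) →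
        FreeGroup.lift (fun e => Multiplicative.ofAdd (genD K T w A e)) (FreeGroup.of e) ^
          w s(e.1.1, e.1.2) = 1 := fun e he => by
      rw [FreeGroup.lift_apply_of]; exact ofAdd_genD_pow e he
    rw [key ⟨(a, b), hav.trans hvb, k3⟩ (Or.inr ⟨{a, v, b}, ht, by simp, by simp⟩),
      key ⟨(a, v), hav, k1⟩ (Or.inr ⟨{a, v, b}, ht, by simp, by simp⟩),
      key ⟨(v, b), hvb, k2⟩ (Or.inr ⟨{a, v, b}, ht, by simp, by simp⟩)]
    simp

variable (K T w A) in
/-- The map from the abelianization to the direct sum. -/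
noncomputable def phiAb : Abelianization (PresentedGroup (WRelators K T w A)) →*
    Multiplicative (⨁ e : WGen K, ZMod (facMod K T w A e)) :=
  Abelianization.lift (PresentedGroup.toGroup lift_rels)

variable (K T w A) in
/-- The generator of the abelianization associated to an edge. -/
noncomputable def ggA (e : WGen K) : Abelianization (PresentedGroup (WRelators K T w A)) :=
  Abelianization.of (PresentedGroup.of e)

lemma phiAb_gg (e : WGen K) :
    phiAb K T w A (ggA K T w A e) = Multiplicative.ofAdd (genD K T w A e) := by
  unfold phiAb ggA
  rw [Abelianization.lift_apply_of]
  exact PresentedGroup.toGroup.of _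

lemma ggA_pow_fac (hwsc : IsWSC K T w A) (h2 : ExactlyTwo T A) (e : WGen K) :
    ggA K T w A e ^ ((facMod K T w A e : ℤ)) = 1 := by
  have h := pow_fac hwsc h2 e
  have h' := congrArg (Abelianization.of (G := PresentedGroup (WRelators K T w A))) h
  rwa [map_zpow, map_one] at h'

variable (K T w A) in
/-- The map from the direct sum to the abelianization. -/
noncomputable def psiAb (hwsc : IsWSC K T w A) (h2 : ExactlyTwo T A) :
    (⨁ e : WGen K, ZMod (facMod K T w A e)) →+
      Additive (Abelianization (PresentedGroup (WRelators K T w A))) :=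
  DirectSum.toAddMonoid fun e => ZMod.lift _
    ⟨zmultiplesHom _ (Additive.ofMul (ggA K T w A e)), by
      rw [zmultiplesHom_apply, ← ofMul_zpow, ggA_pow_fac hwsc h2 e]
      rfl⟩

lemma psiAb_of (hwsc : IsWSC K T w A) (h2 : ExactlyTwo T A) (e : WGen K) (k : ℤ) :
    psiAb K T w A hwsc h2
        (DirectSum.of (fun e => ZMod (facMod K T w A e)) e (k : ZMod (facMod K T w A e))) =
      Additive.ofMul (ggA K T w A e ^ k) := by
  unfold psiAb
  rw [DirectSum.toAddMonoid_of, ZMod.lift_coe, zmultiplesHom_apply, ← ofMul_zpow]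

end Main

/-- Proposition 5.5. If `(K, T, w, A)` satisfies the exactly-two condition,
the abelianization of `π₁(K, w, A)` is the direct sum, over the edges `ab` of `K`, of `ℤ/w(ab)`
if `ab ∈ A`, of `ℤ/w(ab)` if `ab ∉ A` but `ab` is an edge of some 2-simplex of `T`, and of `ℤ`
otherwise. -/
theorem abelianization_weighted_pi1_exactly_two [LinearOrder V] (K : SimpleGraph V)
    (T : Set (Finset V)) (w : Sym2 V → ℤ) (A : SimpleGraph V)
    (hwsc : IsWSC K T w A) (h2 : ExactlyTwo T A) :
    Nonempty (Additive (Abelianization (wpi1 K T w A)) ≃+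
      ⨁ e : WGen K, ZMod (facMod K T w A e)) := by
  classical
  let φ := phiAb K T w A
  let ψ := psiAb K T w A hwsc h2
  let ψm : Multiplicative (⨁ e : WGen K, ZMod (facMod K T w A e)) →*
      Abelianization (PresentedGroup (WRelators K T w A)) :=
    AddMonoidHom.toMultiplicativeLeft ψ
  have c1 : ψm.comp φ = MonoidHom.id _ := by
    apply Abelianization.hom_ext
    refine PresentedGroup.ext fun e => ?_
    show ψm (φ (ggA K T w A e)) = ggA K T w A e
    rw [phiAb_gg]
    show (ψ (genD K T w A e)).toMul = ggA K T w A e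
    have h1 : genD K T w A e =
        DirectSum.of (fun e => ZMod (facMod K T w A e)) e ((1 : ℤ) : ZMod (facMod K T w A e)) := by
      unfold genD; norm_num
    rw [h1, psiAb_of hwsc h2 e 1]
    simp
  have c2 : φ.comp ψm = MonoidHom.id _ := by
    apply MonoidHom.ext
    intro x
    show φ (ψm x) = x
    suffices h : ∀ d : ⨁ e : WGen K, ZMod (facMod K T w A e),
        φ (ψm (Multiplicative.ofAdd d)) = Multiplicative.ofAdd d by
      simpa using h x.toAdd
    intro d
    induction d using DirectSum.induction_on with
    | zero => simp
    | of e c =>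
      obtain ⟨k, rfl⟩ := ZMod.intCast_surjective c
      show φ ((ψ (DirectSum.of _ e ((k : ℤ) : ZMod (facMod K T w A e)))).toMul) = _
      rw [psiAb_of hwsc h2 e k]
      show φ (ggA K T w A e ^ k) = _
      rw [map_zpow, phiAb_gg, ← ofAdd_zsmul]
      congr 1
      unfold genD
      rw [← map_zsmul, zsmul_one]
    | add a b ha hb =>
      have : Multiplicative.ofAdd (a + b) =
          Multiplicative.ofAdd a * Multiplicative.ofAdd b := rfl
      rw [this, map_mul, map_mul, ha, hb]
  exact ⟨MulEquiv.toAdditiveLeft (MonoidHom.toMulEquiv φ ψm c1 c2)⟩
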